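/- arXiv:1610.03274 — 5 statements merged into one kernel-verified Lean document; each statement's English description precedes it below -/
import Mathlib

section
/- Let r0 > 0, p ≥ 0, and let f : (0,r0] → ℝ be nondecreasing with ∫_{0}^{r0} f(t)/t^{p+1} dt convergent (finite). Then lim_{r→0⁺} f(r)·log r = 0 and the Lebesgue–Stieltjes integral ∫_{(0,r0]} log t dμ_f(t) is finite (> −∞). If moreover p > 0, then also lim_{r→0⁺} f(r)/r^p = 0 and ∫_{(0,r0]} t^{−p} dμ_f(t) < +∞. -/
open MeasureTheory Filter Set Real
open scoped ENNReal Topology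

lemma aux_not_int {c a : ℝ} (hc : 0 < c) (ha : 0 < a) :
    ¬ IntegrableOn (fun t : ℝ => c * t⁻¹) (Set.Ioo 0 a) := by
  intro h
  have h2 : IntegrableOn (fun t : ℝ => t⁻¹) (Set.Ioo 0 a) := by
    have := h.const_mul c⁻¹
    simpa [IntegrableOn, ← mul_assoc, inv_mul_cancel₀ hc.ne'] using this
  have h3 : IntegrableOn (fun t : ℝ => t ^ (-1 : ℝ)) (Set.Ioo 0 a) := by
    apply h2.congr_fun _ measurableSet_Ioo
    intro t ht
    exact (Real.rpow_neg_one t).symm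
  have := (intervalIntegral.integrableOn_Ioo_rpow_iff ha).1 h3
  norm_num at this

open intervalIntegral in
lemma aux_int_inv {r s : ℝ} (hr : 0 < r) (hs : 0 < s) (hrs : r ≤ s) :
    ∫ t in Set.Ioc r s, t⁻¹ = Real.log s - Real.log r := by
  rw [← integral_of_le hrs, integral_inv (by
      intro h0
      rcases Set.mem_uIcc.mp h0 with h | h
      · exact absurd h.1 (not_le.mpr hr)
      · exact absurd h.1 (not_le.mpr hs)),
    Real.log_div (ne_of_gt hs) (ne_of_gt hr)]

open intervalIntegral in
lemma aux_int_rpow {p r q : ℝ} (hp : 0 < p) (hr : 0 < r) (hq : 0 < q) (hrq : r ≤ q) :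
    ∫ t in Set.Ioc r q, t ^ (-(p + 1)) = (q ^ (-p) - r ^ (-p)) / (-p) := by
  rw [← integral_of_le hrq, integral_rpow (Or.inr ⟨by
      intro h
      have hp0 : p = 0 := by linarith [neg_eq_iff_eq_neg.mp h]
      exact absurd hp0 (ne_of_gt hp), by
      intro h0
      rcases Set.mem_uIcc.mp h0 with h | h
      · exact absurd h.1 (not_le.mpr hr)
      · exact absurd h.1 (not_le.mpr hq)⟩)]
  have h1 : -(p + 1) + 1 = -p := by ring
  rw [h1]

lemma aux_swap (ν : Measure ℝ) [SFinite ν] {b : ℝ} {g : ℝ → ℝ≥0∞} (hg : Measurable g) :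
    ∫⁻ t in Set.Ioc 0 b, (∫⁻ s in Set.Ioc t b, g s) ∂ν
      ≤ ∫⁻ s in Set.Ioc 0 b, g s * ν (Set.Iio s ∩ Set.Ioc 0 b) := by
  set G : ℝ → ℝ → ℝ≥0∞ := fun t s =>
    Set.indicator {p : ℝ × ℝ | p.1 < p.2} (fun p => g p.2) (t, s) with hG
  have hGmeas : Measurable (Function.uncurry G) := by
    have : Function.uncurry G = Set.indicator {p : ℝ × ℝ | p.1 < p.2} (fun p => g p.2) := by
      funext p
      simp [Function.uncurry, hG]
    rw [this]
    exact (hg.comp measurable_snd).indicator (measurableSet_lt measurable_fst measurable_snd)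
  have step1 : ∫⁻ t in Set.Ioc 0 b, (∫⁻ s in Set.Ioc t b, g s) ∂ν
      = ∫⁻ t in Set.Ioc 0 b, (∫⁻ s in Set.Ioc 0 b, G t s) ∂ν := by
    apply setLIntegral_congr_fun measurableSet_Ioc
    intro t ht
    beta_reduce
    have : ∀ s : ℝ, G t s = (Set.Ioi t).indicator g s := by
      intro s
      simp [hG, Set.indicator_apply, Set.mem_Ioi]
    simp_rw [this]
    rw [lintegral_indicator measurableSet_Ioi, Measure.restrict_restrict measurableSet_Ioi]
    have hset : Set.Ioi t ∩ Set.Ioc 0 b = Set.Ioc t b := by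
      apply Set.ext
      intro s
      simp only [Set.mem_inter_iff, Set.mem_Ioi, Set.mem_Ioc]
      exact ⟨fun ⟨h1, _, h3⟩ => ⟨h1, h3⟩, fun ⟨h1, h2⟩ => ⟨h1, ht.1.trans h1, h2⟩⟩
    rw [hset]
  rw [step1, lintegral_lintegral_swap hGmeas.aemeasurable]
  apply le_of_eq
  apply setLIntegral_congr_fun measurableSet_Ioc
  intro s hs
  beta_reduce
  have : ∀ t : ℝ, G t s = (Set.Iio s).indicator (fun _ => g s) t := by
    intro t
    simp [hG, Set.indicator_apply, Set.mem_Iio]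
  rw [lintegral_congr this]
  rw [lintegral_indicator measurableSet_Iio, setLIntegral_const,
    Measure.restrict_apply measurableSet_Iio]

theorem stmt_3 (r0 p : ℝ) (hr0 : 0 < r0) (hp : 0 ≤ p) (f : ℝ → ℝ) (hf : Monotone f)
    (hint : IntegrableOn (fun t => f t / t ^ (p + 1)) (Set.Ioc 0 r0)) :
    Tendsto (fun r => f r * Real.log r) (nhdsWithin 0 (Set.Ioi 0)) (nhds 0) ∧
    (∫⁻ t in Set.Ioc 0 r0,
        ENNReal.ofReal (-Real.log t) ∂hf.stieltjesFunction.measure) < ⊤ ∧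
    (0 < p →
      Tendsto (fun r => f r / r ^ p) (nhdsWithin 0 (Set.Ioi 0)) (nhds 0) ∧
      (∫⁻ t in Set.Ioc 0 r0,
          ENNReal.ofReal (t ^ (-p)) ∂hf.stieltjesFunction.measure) < ⊤) := by
  have hfm : Measurable f := hf.measurable
  have hmono1 : ∀ {t : ℝ}, 0 < t → t ≤ 1 → t ^ (p + 1) ≤ t := by
    intro t ht ht1
    calc t ^ (p + 1) ≤ t ^ (1 : ℝ) :=
          Real.rpow_le_rpow_of_exponent_ge ht ht1 (by linarith)
      _ = t := Real.rpow_one t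
  have hrpow_pos : ∀ {t : ℝ}, 0 < t → 0 < t ^ (p + 1) :=
    fun ht => Real.rpow_pos_of_pos ht _
  -- Step A : right limit at 0 is 0
  have hL0 : Function.rightLim f 0 = 0 := by
    by_contra hL
    set L := Function.rightLim f 0 with hLdef
    have hLt : Tendsto f (𝓝[>] (0 : ℝ)) (𝓝 L) := hf.tendsto_rightLim 0
    have hLpos : 0 < |L| / 2 := by positivity
    have habs : ∀ᶠ t in 𝓝[>] (0 : ℝ), |L| / 2 ≤ |f t| := by
      filter_upwards [Metric.tendsto_nhds.mp hLt (|L| / 2) hLpos] with t ht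
      rw [Real.dist_eq] at ht
      have h1 : |L| - |f t| ≤ |f t - L| := by
        have := abs_sub_abs_le_abs_sub L (f t)
        rw [abs_sub_comm] at this
        linarith
      linarith [abs_nonneg (f t - L)]
    obtain ⟨u, hu, hsub⟩ := mem_nhdsGT_iff_exists_Ioo_subset.mp habs
    set m := min u (min r0 1) with hm
    have hm0 : 0 < m := lt_min hu (lt_min hr0 one_pos)
    have hcomp : IntegrableOn (fun t : ℝ => |L| / 2 * t⁻¹) (Set.Ioo 0 m) := by
      apply Integrable.mono (hint.mono_set ?_) ?_ ?_
      · intro t ht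
        exact ⟨ht.1, ht.2.le.trans ((min_le_right _ _).trans (min_le_left _ _))⟩
      · exact (measurable_const.mul measurable_inv).aestronglyMeasurable
      · filter_upwards [ae_restrict_mem measurableSet_Ioo] with t ht
        have ht0 : 0 < t := ht.1
        have ht1 : t ≤ 1 := ht.2.le.trans ((min_le_right _ _).trans (min_le_right _ _))
        have htu : |L| / 2 ≤ |f t| := hsub ⟨ht.1, ht.2.trans_le (min_le_left _ _)⟩
        have hpow : 0 < t ^ (p + 1) := hrpow_pos ht0
        rw [Real.norm_eq_abs, Real.norm_eq_abs, abs_div, abs_of_pos hpow,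
          abs_mul, abs_of_pos (inv_pos.mpr ht0), abs_of_pos hLpos]
        calc |L| / 2 * t⁻¹ = (|L| / 2) / t := by ring
          _ ≤ (|L| / 2) / t ^ (p + 1) :=
              div_le_div_of_nonneg_left hLpos.le hpow (hmono1 ht0 ht1)
          _ ≤ |f t| / t ^ (p + 1) := by gcongr
    exact aux_not_int hLpos hm0 hcomp
  have hflim : Tendsto f (𝓝[>] (0 : ℝ)) (𝓝 0) := by
    have := hf.tendsto_rightLim 0; rwa [hL0] at this
  have hpos : ∀ t : ℝ, 0 < t → 0 ≤ f t := fun t ht => hL0 ▸ hf.rightLim_le ht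
  -- the tail integral a and its limit
  set a : ℝ → ℝ := fun s => ∫ t in Set.Ioc 0 s, f t / t ^ (p + 1) with ha_def
  have hfrac_nonneg : ∀ t ∈ Set.Ioc (0 : ℝ) r0, 0 ≤ f t / t ^ (p + 1) := fun t ht =>
    div_nonneg (hpos t ht.1) (hrpow_pos ht.1).le
  have hfracm : Measurable fun t : ℝ => f t / t ^ (p + 1) :=
    hfm.div (measurable_id.pow_const _)
  have ha0 : Tendsto a (𝓝[>] (0 : ℝ)) (𝓝 0) := by
    set h0 : ℝ → ℝ≥0∞ := fun t =>
      (Set.Ioc 0 r0).indicator (fun t => ENNReal.ofReal (f t / t ^ (p + 1))) t with hh0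
    have hh0m : Measurable h0 :=
      (hfracm.ennreal_ofReal).indicator measurableSet_Ioc
    set ρ := volume.withDensity h0 with hρ
    have hρfin : ρ Set.univ < ⊤ := by
      rw [hρ, withDensity_apply _ MeasurableSet.univ, Measure.restrict_univ, hh0,
        lintegral_indicator measurableSet_Ioc]
      exact hint.lintegral_lt_top
    have hAs : ∀ s : ℝ, 0 < s → s ≤ r0 → ENNReal.ofReal (a s) ≤ ρ (Set.Ioc 0 s) := by
      intro s hs hsr
      rw [hρ, withDensity_apply _ measurableSet_Ioc]
      have hint_s : IntegrableOn (fun t => f t / t ^ (p + 1)) (Set.Ioc 0 s) :=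
        hint.mono_set (Set.Ioc_subset_Ioc_right hsr)
      have hnn : 0 ≤ᵐ[volume.restrict (Set.Ioc 0 s)] fun t => f t / t ^ (p + 1) := by
        filter_upwards [ae_restrict_mem measurableSet_Ioc] with t ht
        exact hfrac_nonneg t ⟨ht.1, ht.2.trans hsr⟩
      rw [ha_def]
      rw [ofReal_integral_eq_lintegral_ofReal hint_s hnn]
      apply lintegral_mono_ae
      filter_upwards [ae_restrict_mem measurableSet_Ioc] with t ht
      show ENNReal.ofReal (f t / t ^ (p + 1))
        ≤ (Set.Ioc 0 r0).indicator (fun t => ENNReal.ofReal (f t / t ^ (p + 1))) t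
      have hmem : t ∈ Set.Ioc 0 r0 := ⟨ht.1, ht.2.trans hsr⟩
      exact le_of_eq (Set.indicator_of_mem hmem (fun t => ENNReal.ofReal (f t / t ^ (p + 1)))).symm
    have hseq : Tendsto (fun n : ℕ => ρ (Set.Ioc 0 (1 / (n + 1 : ℝ)))) atTop (𝓝 0) := by
      have h2 : (⋂ n : ℕ, Set.Ioc (0 : ℝ) (1 / (n + 1 : ℝ))) = ∅ := by
        rw [Set.eq_empty_iff_forall_notMem]
        intro x hx
        simp only [Set.mem_iInter, Set.mem_Ioc] at hx
        obtain ⟨n, hn⟩ := exists_nat_one_div_lt (hx 0).1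
        exact absurd (hx n).2 (not_le.mpr hn)
      have h1 : Tendsto (ρ ∘ fun n : ℕ => Set.Ioc (0 : ℝ) (1 / (n + 1 : ℝ))) atTop
          (𝓝 (ρ (⋂ n : ℕ, Set.Ioc (0 : ℝ) (1 / (n + 1 : ℝ))))) := by
        apply tendsto_measure_iInter_atTop
        · intro n; exact measurableSet_Ioc.nullMeasurableSet
        · intro i j hij
          apply Set.Ioc_subset_Ioc_right
          apply one_div_le_one_div_of_le (by positivity)
          have : (i : ℝ) ≤ (j : ℝ) := Nat.cast_le.mpr hij
          linarith
        · exact ⟨0, ((measure_mono (Set.subset_univ _)).trans_lt hρfin).ne⟩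
      rw [h2] at h1
      simpa [Function.comp_def] using h1
    rw [Metric.tendsto_nhdsWithin_nhds]
    intro ε hε
    have hev : ∀ᶠ n : ℕ in atTop, ρ (Set.Ioc 0 (1 / (n + 1 : ℝ))) < ENNReal.ofReal ε := by
      apply hseq.eventually_lt_const
      simp [hε]
    obtain ⟨n, hn⟩ := hev.exists
    refine ⟨min (1 / (n + 1 : ℝ)) r0, lt_min (by positivity) hr0, ?_⟩
    intro x hx hxd
    rw [Real.dist_eq, sub_zero, abs_of_pos hx] at hxd
    have hx1 : x ≤ 1 / (n + 1 : ℝ) := hxd.le.trans (min_le_left _ _)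
    have hxr0 : x ≤ r0 := hxd.le.trans (min_le_right _ _)
    have hax : 0 ≤ a x := by
      apply setIntegral_nonneg measurableSet_Ioc
      intro t ht
      exact hfrac_nonneg t ⟨ht.1, ht.2.trans hxr0⟩
    have : ENNReal.ofReal (a x) < ENNReal.ofReal ε := by
      calc ENNReal.ofReal (a x) ≤ ρ (Set.Ioc 0 x) := hAs x hx hxr0
        _ ≤ ρ (Set.Ioc 0 (1 / (n + 1 : ℝ))) :=
            measure_mono (Set.Ioc_subset_Ioc_right hx1)
        _ < ENNReal.ofReal ε := hn
    rw [Real.dist_eq, sub_zero, abs_of_nonneg hax]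
    exact (ENNReal.ofReal_lt_ofReal_iff hε).mp this
  -- key comparison inequality
  have key : ∀ (w : ℝ → ℝ) (r q : ℝ), 0 < r → r ≤ q → q ≤ r0 →
      ContinuousOn w (Set.Icc r q) → (∀ t ∈ Set.Ioc r q, 0 ≤ w t) →
      (∀ t ∈ Set.Ioc r q, w t ≤ (t ^ (p + 1))⁻¹) →
      f r * ∫ t in Set.Ioc r q, w t ≤ a q := by
    intro w r q hr hrq hqr0 hw hw0 hwle
    have hsub : Set.Ioc r q ⊆ Set.Ioc 0 r0 := Set.Ioc_subset_Ioc hr.le hqr0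
    have int2 : IntegrableOn (fun t => f t / t ^ (p + 1)) (Set.Ioc r q) :=
      hint.mono_set hsub
    have int1 : IntegrableOn w (Set.Ioc r q) :=
      hw.integrableOn_Icc.mono_set Set.Ioc_subset_Icc_self
    have step1 : f r * ∫ t in Set.Ioc r q, w t = ∫ t in Set.Ioc r q, f r * w t :=
      (integral_const_mul _ _).symm
    have step2 : ∫ t in Set.Ioc r q, f r * w t
        ≤ ∫ t in Set.Ioc r q, f t / t ^ (p + 1) := by
      apply setIntegral_mono_on (int1.const_mul _) int2 measurableSet_Ioc
      intro t ht
      have ht0 : 0 < t := hr.trans ht.1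
      rw [div_eq_mul_inv]
      exact mul_le_mul (hf ht.1.le) (hwle t ht) (hw0 t ht) (hpos t ht0)
    have step3 : ∫ t in Set.Ioc r q, f t / t ^ (p + 1) ≤ a q := by
      apply setIntegral_mono_set (hint.mono_set (Set.Ioc_subset_Ioc_right hqr0))
      · filter_upwards [ae_restrict_mem measurableSet_Ioc] with t ht
        exact hfrac_nonneg t ⟨ht.1, ht.2.trans hqr0⟩
      · exact HasSubset.Subset.eventuallyLE (Set.Ioc_subset_Ioc_left hr.le)
    rw [step1]
    exact step2.trans step3
  -- Part 1 : f r * log r → 0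
  have hsqrt_t : Tendsto Real.sqrt (𝓝[>] (0 : ℝ)) (𝓝[>] 0) := by
    apply tendsto_nhdsWithin_of_tendsto_nhds_of_eventually_within
    · have h := Real.continuous_sqrt.tendsto 0
      rw [Real.sqrt_zero] at h
      exact h.mono_left nhdsWithin_le_nhds
    · filter_upwards [self_mem_nhdsWithin] with x hx
      exact Real.sqrt_pos.mpr hx
  have part1 : Tendsto (fun r => f r * Real.log r) (𝓝[>] (0 : ℝ)) (𝓝 0) := by
    have hupper : Tendsto (fun r => 2 * a (Real.sqrt r)) (𝓝[>] (0 : ℝ)) (𝓝 0) := by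
      have h := (ha0.comp hsqrt_t).const_mul (2 : ℝ)
      simpa using h
    have hδ : (0 : ℝ) < min 1 (r0 ^ 2) := lt_min one_pos (by positivity)
    have hmem : Set.Ioo (0 : ℝ) (min 1 (r0 ^ 2)) ∈ 𝓝[>] (0 : ℝ) :=
      Ioo_mem_nhdsGT_of_mem ⟨le_refl 0, hδ⟩
    have hlow : ∀ᶠ r in 𝓝[>] (0 : ℝ), 0 ≤ f r * (-Real.log r) := by
      filter_upwards [hmem] with r hrm
      exact mul_nonneg (hpos r hrm.1)
        (neg_nonneg.mpr (Real.log_nonpos hrm.1.le (hrm.2.le.trans (min_le_left _ _))))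
    have hup : ∀ᶠ r in 𝓝[>] (0 : ℝ),
        f r * (-Real.log r) ≤ 2 * a (Real.sqrt r) := by
      filter_upwards [hmem] with r hrm
      have hr' : 0 < r := hrm.1
      have hr1 : r ≤ 1 := hrm.2.le.trans (min_le_left _ _)
      have hrr02 : r ≤ r0 ^ 2 := hrm.2.le.trans (min_le_right _ _)
      set s := Real.sqrt r with hs_def
      have hs_pos : 0 < s := Real.sqrt_pos.mpr hr'
      have hrs : r ≤ s :=
        calc r = Real.sqrt (r ^ 2) := (Real.sqrt_sq hr'.le).symm
          _ ≤ Real.sqrt r := Real.sqrt_le_sqrt (by nlinarith)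
      have hs1 : s ≤ 1 := Real.sqrt_le_one.mpr hr1
      have hsr0 : s ≤ r0 :=
        calc s ≤ Real.sqrt (r0 ^ 2) := Real.sqrt_le_sqrt hrr02
          _ = r0 := Real.sqrt_sq hr0.le
      have hk := key (fun t => t⁻¹) r s hr' hrs hsr0
        (continuousOn_id.inv₀ fun t ht => ne_of_gt (hr'.trans_le ht.1))
        (fun t ht => inv_nonneg.mpr (hr'.trans ht.1).le)
        (fun t ht => inv_anti₀ (hrpow_pos (hr'.trans ht.1))
          (hmono1 (hr'.trans ht.1) (ht.2.trans hs1)))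
      have hIeq : ∫ t in Set.Ioc r s, t⁻¹ = Real.log s - Real.log r :=
        aux_int_inv hr' hs_pos hrs
      rw [hIeq] at hk
      have hlog : Real.log s = Real.log r / 2 := Real.log_sqrt hr'.le
      have : f r * (-Real.log r) = 2 * (f r * (Real.log s - Real.log r)) := by
        rw [hlog]; ring
      rw [this]
      linarith
    have hsq : Tendsto (fun r => f r * (-Real.log r)) (𝓝[>] (0 : ℝ)) (𝓝 0) :=
      tendsto_of_tendsto_of_tendsto_of_le_of_le' tendsto_const_nhds hupper hlow hup
    have h := hsq.neg
    rw [neg_zero] at h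
    apply h.congr
    intro r
    ring
  -- Part 3 : p > 0 → f r / r ^ p → 0
  have part3 : 0 < p → Tendsto (fun r => f r / r ^ p) (𝓝[>] (0 : ℝ)) (𝓝 0) := by
    intro hp'
    have hdouble : Tendsto (fun r : ℝ => 2 * r) (𝓝[>] (0 : ℝ)) (𝓝[>] 0) := by
      apply tendsto_nhdsWithin_of_tendsto_nhds_of_eventually_within
      · have h : Tendsto (fun r : ℝ => 2 * r) (𝓝 0) (𝓝 (2 * 0)) :=
          (continuous_const.mul continuous_id).tendsto 0
        rw [mul_zero] at h
        exact h.mono_left nhdsWithin_le_nhds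
      · filter_upwards [self_mem_nhdsWithin] with x hx
        exact mul_pos two_pos (Set.mem_Ioi.mp hx)
    set c : ℝ := (1 - 2 ^ (-p)) / p with hc_def
    have hc : 0 < c := by
      apply div_pos _ hp'
      have : (2 : ℝ) ^ (-p) < 1 :=
        Real.rpow_lt_one_of_one_lt_of_neg one_lt_two (neg_lt_zero.mpr hp')
      linarith
    have hupper : Tendsto (fun r => a (2 * r) / c) (𝓝[>] (0 : ℝ)) (𝓝 0) := by
      have h := (ha0.comp hdouble).div_const c
      simpa using h
    have hmem : Set.Ioo (0 : ℝ) (r0 / 2) ∈ 𝓝[>] (0 : ℝ) :=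
      Ioo_mem_nhdsGT_of_mem ⟨le_refl 0, by positivity⟩
    have hlow : ∀ᶠ r in 𝓝[>] (0 : ℝ), 0 ≤ f r / r ^ p := by
      filter_upwards [hmem] with r hrm
      exact div_nonneg (hpos r hrm.1) (Real.rpow_nonneg hrm.1.le _)
    have hup : ∀ᶠ r in 𝓝[>] (0 : ℝ), f r / r ^ p ≤ a (2 * r) / c := by
      filter_upwards [hmem] with r hrm
      have hr' : 0 < r := hrm.1
      have h2r : 2 * r ≤ r0 := by linarith [hrm.2]
      have hr2r : r ≤ 2 * r := by linarith
      have hk := key (fun t => t ^ (-(p + 1))) r (2 * r) hr' hr2r h2r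
        (continuousOn_id.rpow_const fun t ht => Or.inl (ne_of_gt (hr'.trans_le ht.1)))
        (fun t ht => Real.rpow_nonneg (hr'.trans ht.1).le _)
        (fun t ht => le_of_eq (Real.rpow_neg (hr'.trans ht.1).le _))
      have hIeq : ∫ t in Set.Ioc r (2 * r), t ^ (-(p + 1))
          = ((2 * r) ^ (-p) - r ^ (-p)) / (-p) :=
        aux_int_rpow hp' hr' (by linarith) hr2r
      rw [hIeq] at hk
      have hmul : (2 * r) ^ (-p) = 2 ^ (-p) * r ^ (-p) :=
        Real.mul_rpow two_pos.le hr'.le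
      have heq : f r * (((2 * r) ^ (-p) - r ^ (-p)) / (-p)) = f r * r ^ (-p) * c := by
        rw [hmul, hc_def, div_neg]
        ring
      have hk2 : f r * r ^ (-p) * c ≤ a (2 * r) := by
        rw [← heq]
        exact hk
      have : f r / r ^ p = f r * r ^ (-p) := by
        rw [Real.rpow_neg hr'.le, div_eq_mul_inv]
      rw [this]
      exact (le_div_iff₀ hc).mpr hk2
    exact tendsto_of_tendsto_of_tendsto_of_le_of_le' tendsto_const_nhds hupper hlow hup
  -- Stieltjes facts
  have hF0 : hf.stieltjesFunction 0 = 0 := (hf.stieltjesFunction_eq 0).trans hL0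
  have hμIoc : ∀ s : ℝ, hf.stieltjesFunction.measure (Set.Ioc 0 s)
      = ENNReal.ofReal (hf.stieltjesFunction s) := by
    intro s
    rw [StieltjesFunction.measure_Ioc, hF0, sub_zero]
  have haeF : ∀ᵐ s ∂(volume : Measure ℝ), hf.stieltjesFunction s = f s := by
    have hcount : Set.Countable {x | ¬ContinuousAt f x} := hf.countable_not_continuousAt
    have hae : ∀ᵐ x ∂(volume : Measure ℝ), ContinuousAt f x := by
      rw [ae_iff]
      exact hcount.measure_zero _
    filter_upwards [hae] with x hx
    rw [hf.stieltjesFunction_eq]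
    exact rightLim_eq_of_tendsto
      (hx.tendsto.mono_left nhdsWithin_le_nhds)
  set μ := hf.stieltjesFunction.measure with hμdef
  have hμfin : ∀ s : ℝ, μ (Set.Ioc 0 s) < ⊤ := by
    intro s
    rw [hμIoc]
    exact ENNReal.ofReal_lt_top
  have part2 : (∫⁻ t in Set.Ioc 0 r0,
      ENNReal.ofReal (-Real.log t) ∂hf.stieltjesFunction.measure) < ⊤ := by
    set b := min r0 1 with hb_def
    have hb0 : 0 < b := lt_min hr0 one_pos
    have hb1 : b ≤ 1 := min_le_right _ _
    have hbr0 : b ≤ r0 := min_le_left _ _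
    have hzero : (∫⁻ t in Set.Ioc b r0, ENNReal.ofReal (-Real.log t) ∂μ) = 0 := by
      have hz : ∀ t ∈ Set.Ioc b r0, ENNReal.ofReal (-Real.log t) = (0 : ℝ≥0∞) := by
        intro t ht
        have h1t : 1 ≤ t := by
          rcases le_or_gt r0 1 with h | h
          · exfalso
            rw [hb_def, min_eq_left h] at ht
            exact absurd ht.2 (not_le.mpr ht.1)
          · rw [hb_def, min_eq_right h.le] at ht
            exact ht.1.le
        rw [ENNReal.ofReal_eq_zero]
        simp [Real.log_nonneg h1t]
      rw [setLIntegral_congr_fun measurableSet_Ioc hz, lintegral_zero]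
    have hsplit : (∫⁻ t in Set.Ioc 0 r0, ENNReal.ofReal (-Real.log t) ∂μ)
        ≤ (∫⁻ t in Set.Ioc 0 b, ENNReal.ofReal (-Real.log t) ∂μ) := by
      calc (∫⁻ t in Set.Ioc 0 r0, ENNReal.ofReal (-Real.log t) ∂μ)
          = ∫⁻ t in Set.Ioc 0 b ∪ Set.Ioc b r0, ENNReal.ofReal (-Real.log t) ∂μ := by
            rw [Set.Ioc_union_Ioc_eq_Ioc hb0.le hbr0]
        _ ≤ (∫⁻ t in Set.Ioc 0 b, ENNReal.ofReal (-Real.log t) ∂μ)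
            + (∫⁻ t in Set.Ioc b r0, ENNReal.ofReal (-Real.log t) ∂μ) := lintegral_union_le _ _ _
        _ = ∫⁻ t in Set.Ioc 0 b, ENNReal.ofReal (-Real.log t) ∂μ := by rw [hzero, add_zero]
    apply lt_of_le_of_lt hsplit
    -- decompose the integrand
    have hdecomp : ∀ t ∈ Set.Ioc (0 : ℝ) b, ENNReal.ofReal (-Real.log t)
        = (∫⁻ s in Set.Ioc t b, ENNReal.ofReal s⁻¹ ∂volume)
          + ENNReal.ofReal (-Real.log b) := by
      intro t ht
      have hlog : ∫⁻ s in Set.Ioc t b, ENNReal.ofReal s⁻¹ ∂volume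
          = ENNReal.ofReal (Real.log b - Real.log t) := by
        rw [← ofReal_integral_eq_lintegral_ofReal]
        · rw [aux_int_inv ht.1 hb0 ht.2]
        · exact ((continuousOn_id.inv₀ fun x hx =>
            ne_of_gt (ht.1.trans_le hx.1)).integrableOn_Icc).mono_set
            Set.Ioc_subset_Icc_self
        · filter_upwards [ae_restrict_mem measurableSet_Ioc] with s hs
          exact inv_nonneg.mpr (ht.1.trans hs.1).le
      rw [hlog, ← ENNReal.ofReal_add
        (sub_nonneg.mpr (Real.log_le_log ht.1 ht.2))
        (neg_nonneg.mpr (Real.log_nonpos hb0.le hb1))]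
      congr 1
      ring
    rw [setLIntegral_congr_fun measurableSet_Ioc hdecomp,
      lintegral_add_right _ measurable_const]
    apply ENNReal.add_lt_top.mpr
    constructor
    · -- swap part
      have hswap := aux_swap μ (b := b)
        (g := fun s : ℝ => ENNReal.ofReal s⁻¹) measurable_inv.ennreal_ofReal
      apply lt_of_le_of_lt hswap
      have hbound : (∫⁻ s in Set.Ioc 0 b,
          ENNReal.ofReal s⁻¹ * μ (Set.Iio s ∩ Set.Ioc 0 b) ∂volume)
          ≤ ∫⁻ s in Set.Ioc 0 b, ENNReal.ofReal (f s / s ^ (p + 1)) ∂volume := by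
        apply lintegral_mono_ae
        filter_upwards [ae_restrict_mem measurableSet_Ioc, ae_restrict_of_ae haeF]
          with s hs hFs
        have hs0 : 0 < s := hs.1
        calc ENNReal.ofReal s⁻¹ * μ (Set.Iio s ∩ Set.Ioc 0 b)
            ≤ ENNReal.ofReal s⁻¹ * μ (Set.Ioc 0 s) := by
              apply mul_le_mul_right
              apply measure_mono
              intro x hx
              exact ⟨hx.2.1, hx.1.le⟩
          _ = ENNReal.ofReal s⁻¹ * ENNReal.ofReal (hf.stieltjesFunction s) := by
              rw [hμIoc]
          _ = ENNReal.ofReal (s⁻¹ * f s) := by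
              rw [hFs, ← ENNReal.ofReal_mul (inv_nonneg.mpr hs0.le)]
          _ ≤ ENNReal.ofReal (f s / s ^ (p + 1)) := by
              apply ENNReal.ofReal_le_ofReal
              rw [mul_comm, div_eq_mul_inv]
              exact mul_le_mul_of_nonneg_left
                (inv_anti₀ (hrpow_pos hs0) (hmono1 hs0 (hs.2.trans hb1)))
                (hpos s hs0)
      apply lt_of_le_of_lt hbound
      apply lt_of_le_of_lt
        (lintegral_mono' (Measure.restrict_mono (Set.Ioc_subset_Ioc_right hbr0) le_rfl) le_rfl)
      exact hint.lintegral_lt_top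
    · rw [setLIntegral_const]
      exact ENNReal.mul_lt_top ENNReal.ofReal_lt_top (hμfin b)
  have part4 : 0 < p → (∫⁻ t in Set.Ioc 0 r0,
      ENNReal.ofReal (t ^ (-p)) ∂hf.stieltjesFunction.measure) < ⊤ := by
    intro hp'
    have hdecomp : ∀ t ∈ Set.Ioc (0 : ℝ) r0, ENNReal.ofReal (t ^ (-p))
        = (∫⁻ s in Set.Ioc t r0, ENNReal.ofReal (p * s ^ (-(p + 1))) ∂volume)
          + ENNReal.ofReal (r0 ^ (-p)) := by
      intro t ht
      have hval : ∫⁻ s in Set.Ioc t r0, ENNReal.ofReal (p * s ^ (-(p + 1))) ∂volume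
          = ENNReal.ofReal (t ^ (-p) - r0 ^ (-p)) := by
        rw [← ofReal_integral_eq_lintegral_ofReal]
        · rw [integral_const_mul, aux_int_rpow hp' ht.1 hr0 ht.2]
          have hpne : p ≠ 0 := ne_of_gt hp'
          rw [div_neg, mul_neg, mul_comm, div_mul_cancel₀ _ hpne, neg_sub]
        · exact ((continuousOn_const.mul (continuousOn_id.rpow_const fun x hx =>
            Or.inl (ne_of_gt (ht.1.trans_le hx.1)))).integrableOn_Icc).mono_set
            Set.Ioc_subset_Icc_self
        · filter_upwards [ae_restrict_mem measurableSet_Ioc] with s hs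
          exact mul_nonneg hp'.le (Real.rpow_nonneg (ht.1.trans hs.1).le _)
      rw [hval, ← ENNReal.ofReal_add
        (sub_nonneg.mpr (Real.rpow_le_rpow_of_nonpos ht.1 ht.2 (neg_nonpos.mpr hp'.le)))
        (Real.rpow_nonneg hr0.le _)]
      congr 1
      ring
    rw [← hμdef, setLIntegral_congr_fun measurableSet_Ioc hdecomp,
      lintegral_add_right _ measurable_const]
    apply ENNReal.add_lt_top.mpr
    constructor
    · have hswap := aux_swap μ (b := r0)
        (g := fun s : ℝ => ENNReal.ofReal (p * s ^ (-(p + 1))))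
        ((measurable_const.mul (measurable_id.pow_const _)).ennreal_ofReal)
      apply lt_of_le_of_lt hswap
      have hbound : (∫⁻ s in Set.Ioc 0 r0,
          ENNReal.ofReal (p * s ^ (-(p + 1))) * μ (Set.Iio s ∩ Set.Ioc 0 r0) ∂volume)
          ≤ ∫⁻ s in Set.Ioc 0 r0,
            ENNReal.ofReal p * ENNReal.ofReal (f s / s ^ (p + 1)) ∂volume := by
        apply lintegral_mono_ae
        filter_upwards [ae_restrict_mem measurableSet_Ioc, ae_restrict_of_ae haeF]
          with s hs hFs
        have hs0 : 0 < s := hs.1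
        calc ENNReal.ofReal (p * s ^ (-(p + 1))) * μ (Set.Iio s ∩ Set.Ioc 0 r0)
            ≤ ENNReal.ofReal (p * s ^ (-(p + 1))) * μ (Set.Ioc 0 s) := by
              apply mul_le_mul_right
              apply measure_mono
              intro x hx
              exact ⟨hx.2.1, hx.1.le⟩
          _ = ENNReal.ofReal (p * s ^ (-(p + 1)))
              * ENNReal.ofReal (hf.stieltjesFunction s) := by rw [hμIoc]
          _ = ENNReal.ofReal (p * s ^ (-(p + 1)) * f s) := by
              rw [hFs, ← ENNReal.ofReal_mul
                (mul_nonneg hp'.le (Real.rpow_nonneg hs0.le _))]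
          _ = ENNReal.ofReal (p * (f s / s ^ (p + 1))) := by
              congr 1
              rw [Real.rpow_neg hs0.le, div_eq_mul_inv]
              ring
          _ = ENNReal.ofReal p * ENNReal.ofReal (f s / s ^ (p + 1)) :=
              ENNReal.ofReal_mul hp'.le
      apply lt_of_le_of_lt hbound
      rw [lintegral_const_mul _ hfracm.ennreal_ofReal]
      exact ENNReal.mul_lt_top ENNReal.ofReal_lt_top hint.lintegral_lt_top
    · rw [setLIntegral_const]
      exact ENNReal.mul_lt_top ENNReal.ofReal_lt_top (hμfin r0)
  exact ⟨part1, part2, fun hp' => ⟨part3 hp', part4 hp'⟩⟩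
end

section
/- Let t1 < t2 be real numbers, b > 1, and let z ∈ ℂ⁺ satisfy |z − (t1+t2)/2| ≥ b·(t2−t1)/2. Then ω(z,[t1,t2]) ≥ ((b−1)/(2πb)) · (t2−t1)·Im z / Q(z,t1,t2) ≥ ((b−1)/(2πb)) · (t2−t1)·Im z / ((|z| + |t1|)·(|z| + |t2|)). -/
open MeasureTheory

/-- Harmonic measure of the segment `[t1, t2]` at the point `z` for the open upper
half-plane, given by the Poisson integral of the indicator of `[t1, t2]`. -/
noncomputable def omegaUHP (z : ℂ) (t1 t2 : ℝ) : ℝ :=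
  ∫ t in t1..t2, (1 / Real.pi) * (z.im / ((t - z.re) ^ 2 + z.im ^ 2))

/-- `Q(z,t1,t2) := |z|² − (Re z)·(t1 + t2) + t1·t2`. -/
noncomputable def Q (z : ℂ) (t1 t2 : ℝ) : ℝ :=
  ‖z‖ ^ 2 - z.re * (t1 + t2) + t1 * t2

/-!
With `c = (t1 + t2) / 2`, `r = (t2 - t1) / 2` and `s = |z - c|`, one has `Q(z, t1, t2) = s² - r²`.
Every `t ∈ [t1, t2]` satisfies `|z - t| ≤ s + r`, so the Poisson kernel is at least
`Im z / (π (s + r)²)` on the segment and `ω(z, [t1, t2]) ≥ 2r Im z / (π (s + r)²)`; the hypothesis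
`s ≥ b r` gives `(b - 1)(s + r)² ≤ 2b (s² - r²)`, which is the first inequality. The second holds
because `Q(z, t1, t2) = Re ((z - t1) (z̄ - t2)) ≤ |z - t1| |z - t2|`.
-/

lemma Complex.sq_norm_sub_ofReal (z : ℂ) (t : ℝ) : ‖z - t‖ ^ 2 = (t - z.re) ^ 2 + z.im ^ 2 := by
  rw [Complex.sq_norm, Complex.normSq_apply]
  simp only [Complex.sub_re, Complex.sub_im, Complex.ofReal_re, Complex.ofReal_im]
  ring

lemma Q_eq_re_mul_conj (z : ℂ) (t1 t2 : ℝ) :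
    Q z t1 t2 = ((z - t1) * (starRingEnd ℂ) (z - t2)).re := by
  simp only [Q, Complex.sq_norm, Complex.normSq_apply, map_sub, Complex.conj_ofReal,
    Complex.mul_re, Complex.sub_re, Complex.ofReal_re, Complex.conj_re, Complex.sub_im,
    Complex.ofReal_im, sub_zero, Complex.conj_im, mul_neg, sub_neg_eq_add]
  ring

lemma Q_le_norm_sub_mul_norm_sub (z : ℂ) (t1 t2 : ℝ) : Q z t1 t2 ≤ ‖z - t1‖ * ‖z - t2‖ := by
  rw [Q_eq_re_mul_conj, ← Complex.norm_conj (z - t2), ← norm_mul]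
  exact Complex.re_le_norm _

lemma Q_le_norm_add_abs_mul (z : ℂ) (t1 t2 : ℝ) : Q z t1 t2 ≤ (‖z‖ + |t1|) * (‖z‖ + |t2|) := by
  have h (t : ℝ) : ‖z - t‖ ≤ ‖z‖ + |t| := by
    simpa [Complex.norm_real] using norm_sub_le z (t : ℂ)
  exact (Q_le_norm_sub_mul_norm_sub z t1 t2).trans
    (mul_le_mul (h t1) (h t2) (norm_nonneg _) (by positivity))

lemma Q_eq_sq_norm_sub_midpoint (z : ℂ) (t1 t2 : ℝ) :
    Q z t1 t2 = ‖z - (((t1 + t2) / 2 : ℝ) : ℂ)‖ ^ 2 - ((t2 - t1) / 2) ^ 2 := by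
  rw [Complex.sq_norm_sub_ofReal, Q, Complex.sq_norm, Complex.normSq_apply]
  ring

lemma norm_sub_le_norm_sub_midpoint_add {z : ℂ} {t1 t2 t : ℝ} (ht : t ∈ Set.Icc t1 t2) :
    ‖z - t‖ ≤ ‖z - (((t1 + t2) / 2 : ℝ) : ℂ)‖ + (t2 - t1) / 2 := by
  have hc : ‖(((t1 + t2) / 2 : ℝ) : ℂ) - t‖ ≤ (t2 - t1) / 2 := by
    rw [← Complex.ofReal_sub, Complex.norm_real, Real.norm_eq_abs, abs_le]
    constructor <;> linarith [ht.1, ht.2]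
  linarith [norm_sub_le_norm_sub_add_norm_sub z (((t1 + t2) / 2 : ℝ) : ℂ) t]

lemma le_omegaUHP_of_norm_sub_le {z : ℂ} (hz : 0 < z.im) {t1 t2 R : ℝ} (ht : t1 ≤ t2)
    (hR : ∀ t ∈ Set.Icc t1 t2, ‖z - t‖ ≤ R) :
    (t2 - t1) * (1 / Real.pi * (z.im / R ^ 2)) ≤ omegaUHP z t1 t2 := by
  have hpos (t : ℝ) : 0 < (t - z.re) ^ 2 + z.im ^ 2 := by positivity
  have hcont : Continuous fun t : ℝ => 1 / Real.pi * (z.im / ((t - z.re) ^ 2 + z.im ^ 2)) :=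
    continuous_const.mul (continuous_const.div (by fun_prop) fun t => (hpos t).ne')
  have hmono := intervalIntegral.integral_mono_on (μ := volume) ht
    (intervalIntegrable_const (c := 1 / Real.pi * (z.im / R ^ 2)))
    (hcont.intervalIntegrable t1 t2) fun t htI => by
      have hle : (t - z.re) ^ 2 + z.im ^ 2 ≤ R ^ 2 := by
        rw [← Complex.sq_norm_sub_ofReal]
        exact pow_le_pow_left₀ (norm_nonneg _) (hR t htI) 2
      gcongr
  rwa [intervalIntegral.integral_const, smul_eq_mul] at hmono

lemma sub_one_div_two_mul_sq_add_le_sq_sub_sq {b r s : ℝ} (hr : 0 < r) (hb : 1 < b)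
    (hs : b * r ≤ s) :
    (b - 1) / (2 * b) * (s + r) ^ 2 ≤ s ^ 2 - r ^ 2 := by
  -- `2b (s² - r²) - (b - 1)(s + r)² = (s + r) ((b + 1) s - (3b - 1) r)`
  have hlin : (3 * b - 1) * r ≤ (b + 1) * s := by
    nlinarith [mul_nonneg (sq_nonneg (b - 1)) hr.le]
  rw [div_mul_eq_mul_div, div_le_iff₀ (by positivity)]
  nlinarith [mul_nonneg (by nlinarith : 0 ≤ s + r) (sub_nonneg.2 hlin)]

theorem stmt_8 (z : ℂ) (hz : 0 < z.im) (t1 t2 b : ℝ) (ht : t1 < t2) (hb : 1 < b)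
    (hout : b * ((t2 - t1) / 2) ≤ ‖z - (((t1 + t2) / 2 : ℝ) : ℂ)‖) :
    ((b - 1) / (2 * Real.pi * b)) * ((t2 - t1) * z.im / Q z t1 t2) ≤
        omegaUHP z t1 t2 ∧
    ((b - 1) / (2 * Real.pi * b)) *
        ((t2 - t1) * z.im / ((‖z‖ + |t1|) * (‖z‖ + |t2|))) ≤
      ((b - 1) / (2 * Real.pi * b)) * ((t2 - t1) * z.im / Q z t1 t2) := by
  have hr : 0 < (t2 - t1) / 2 := by linarith
  set s := ‖z - (((t1 + t2) / 2 : ℝ) : ℂ)‖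
  set r := (t2 - t1) / 2
  have hQ : Q z t1 t2 = s ^ 2 - r ^ 2 := Q_eq_sq_norm_sub_midpoint z t1 t2
  have hrs : r < s := by nlinarith
  have hQ_pos : 0 < Q z t1 t2 := by
    rw [hQ]
    nlinarith
  have hω := le_omegaUHP_of_norm_sub_le hz ht.le fun t htI =>
    norm_sub_le_norm_sub_midpoint_add htI
  refine ⟨le_trans ?_ hω, ?_⟩
  · calc (b - 1) / (2 * Real.pi * b) * ((t2 - t1) * z.im / Q z t1 t2)
        = ((b - 1) / (2 * b) * (s + r) ^ 2 / Q z t1 t2) *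
            ((t2 - t1) * (1 / Real.pi * (z.im / (s + r) ^ 2))) := by
          have hsr : s + r ≠ 0 := by linarith
          field_simp
      _ ≤ 1 * ((t2 - t1) * (1 / Real.pi * (z.im / (s + r) ^ 2))) := by
          gcongr
          rw [div_le_one hQ_pos, hQ]
          exact sub_one_div_two_mul_sq_add_le_sq_sub_sq hr hb hout
      _ = (t2 - t1) * (1 / Real.pi * (z.im / (s + r) ^ 2)) := one_mul _
  · gcongr
    exact Q_le_norm_add_abs_mul z t1 t2
end

section
/- Let 0 ≤ t1 < t2 < +∞ and z ∈ ℂ⁺. (a) If Re z ≤ 0, then ω(z,[t1,t2]) ≤ (t2−t1)·(1/π)·Im z/|z|². (b) If Re z / |z| < 2·√(t1·t2)/(t1+t2) and |z| ≠ √(t1·t2), then ω(z,[t1,t2]) ≤ (t2−t1)·Im z / (π·(|z| − √(t1·t2))²). (c) If a ∈ (0,1) and Re z / |z| ≤ 2·a·√(t1·t2)/(t1+t2), then ω(z,[t1,t2]) ≤ (t2−t1)/(π·(1−a²)) · Im z/|z|². -/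
/-!
For `t ≥ 0` the Poisson denominator `(t - Re z)² + (Im z)² = t² - 2t·Re z + |z|²` can only
decrease when `Re z` is replaced by some `s ≥ Re z`, which gives the comparison kernel with
denominator `|z|² - s² + (t - s)²`. With `s = 0`, resp. `s = 2a√(t₁t₂)/(t₁+t₂)·|z|`, the
constant lower bound `|z|² - s²` yields (a) and (c). For (b) take `s = 2√(t₁t₂)/(t₁+t₂)·|z|`:
the integral of the comparison kernel is a difference of arctangents, `arctan w ≤ w` bounds it
by `(t₂ - t₁)/(|z|² - s² + (t₁ - s)(t₂ - s))`, and this denominator is exactly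
`(|z| - √(t₁t₂))²`.
-/

open MeasureTheory

open Real

namespace Real

lemma arctan_le_self {x : ℝ} (hx : 0 ≤ x) : arctan x ≤ x := by
  simpa only [tan_arctan] using le_tan (arctan_nonneg.mpr hx) (arctan_lt_pi_div_two x)

lemma arctan_sub_arctan_le {x y : ℝ} (hxy : x ≤ y) (h : 0 < 1 + x * y) :
    arctan y - arctan x ≤ (y - x) / (1 + x * y) := by
  have hsub : arctan y - arctan x = arctan ((y - x) / (1 + x * y)) := by
    rw [sub_eq_add_neg, ← arctan_neg, arctan_add (by linarith)]
    congr 2; ring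
  rw [hsub]
  exact arctan_le_self (div_nonneg (sub_nonneg.mpr hxy) h.le)

lemma two_mul_sqrt_mul_lt_add {a b : ℝ} (ha : 0 ≤ a) (hb : 0 ≤ b) (hab : a ≠ b) :
    2 * √(a * b) < a + b := by
  have hsq : 0 < (a - b) ^ 2 := sq_pos_of_ne_zero (sub_ne_zero.mpr hab)
  nlinarith [sq_sqrt (mul_nonneg ha hb), sqrt_nonneg (a * b)]

end Real

lemma integral_inv_add_sq_sub_le {d b t1 t2 : ℝ} (hd : 0 < d) (h12 : t1 ≤ t2)
    (hpos : 0 < d + (t1 - b) * (t2 - b)) :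
    ∫ t in t1..t2, (d + (t - b) ^ 2)⁻¹ ≤ (t2 - t1) / (d + (t1 - b) * (t2 - b)) := by
  obtain ⟨c, hc, rfl⟩ : ∃ c, 0 < c ∧ c ^ 2 = d := ⟨√d, sqrt_pos.mpr hd, sq_sqrt hd.le⟩
  rw [intervalIntegral.integral_comp_sub_right (fun t => (c ^ 2 + t ^ 2)⁻¹),
    integral_inv_sq_add_sq hc.ne']
  have hden : 1 + (t1 - b) / c * ((t2 - b) / c) = (c ^ 2 + (t1 - b) * (t2 - b)) / c ^ 2 := by
    field_simp
  calc c⁻¹ * (arctan ((t2 - b) / c) - arctan ((t1 - b) / c))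
      ≤ c⁻¹ * (((t2 - b) / c - (t1 - b) / c) / (1 + (t1 - b) / c * ((t2 - b) / c))) := by
        gcongr
        exact arctan_sub_arctan_le (by gcongr) (hden ▸ by positivity)
    _ = _ := by rw [hden]; field_simp; ring

lemma sq_norm_sub_sq_add_sq_le {z : ℂ} {s t : ℝ} (ht : 0 ≤ t) (hs : z.re ≤ s) :
    ‖z‖ ^ 2 - s ^ 2 + (t - s) ^ 2 ≤ (t - z.re) ^ 2 + z.im ^ 2 := by
  rw [Complex.sq_norm, Complex.normSq_apply]
  nlinarith [mul_le_mul_of_nonneg_left hs ht]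

lemma omegaUHP_le_integral_of_re_le {z : ℂ} (hz : 0 < z.im) {t1 t2 s : ℝ} (h1 : 0 ≤ t1)
    (h12 : t1 ≤ t2) (hs : z.re ≤ s) (hsz : s ^ 2 < ‖z‖ ^ 2) :
    omegaUHP z t1 t2 ≤ z.im / π * ∫ t in t1..t2, (‖z‖ ^ 2 - s ^ 2 + (t - s) ^ 2)⁻¹ := by
  have hd : 0 < ‖z‖ ^ 2 - s ^ 2 := sub_pos.mpr hsz
  rw [omegaUHP, ← intervalIntegral.integral_const_mul]
  refine intervalIntegral.integral_mono_on h12 (Continuous.intervalIntegrable ?_ _ _)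
    (Continuous.intervalIntegrable ?_ _ _) fun t ht => ?_
  · exact continuous_const.mul (continuous_const.div (by fun_prop) fun t => by positivity)
  · exact continuous_const.mul ((by fun_prop : Continuous _).inv₀ fun t => by positivity)
  · have hq : 0 < ‖z‖ ^ 2 - s ^ 2 + (t - s) ^ 2 := by positivity
    calc 1 / π * (z.im / ((t - z.re) ^ 2 + z.im ^ 2))
        = z.im / π * ((t - z.re) ^ 2 + z.im ^ 2)⁻¹ := by ring
      _ ≤ z.im / π * (‖z‖ ^ 2 - s ^ 2 + (t - s) ^ 2)⁻¹ := by
        gcongr z.im / π * ?_⁻¹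
        exact sq_norm_sub_sq_add_sq_le (h1.trans ht.1) hs

lemma omegaUHP_le_const_of_re_le {z : ℂ} (hz : 0 < z.im) {t1 t2 s : ℝ} (h1 : 0 ≤ t1)
    (h12 : t1 ≤ t2) (hs : z.re ≤ s) (hsz : s ^ 2 < ‖z‖ ^ 2) :
    omegaUHP z t1 t2 ≤ z.im / π * ((t2 - t1) / (‖z‖ ^ 2 - s ^ 2)) := by
  have hd : 0 < ‖z‖ ^ 2 - s ^ 2 := sub_pos.mpr hsz
  refine (omegaUHP_le_integral_of_re_le hz h1 h12 hs hsz).trans ?_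
  gcongr
  calc ∫ t in t1..t2, (‖z‖ ^ 2 - s ^ 2 + (t - s) ^ 2)⁻¹
      ≤ ∫ _ in t1..t2, (‖z‖ ^ 2 - s ^ 2)⁻¹ := by
        refine intervalIntegral.integral_mono_on h12 (Continuous.intervalIntegrable ?_ _ _)
          intervalIntegrable_const fun t _ => ?_
        · exact (by fun_prop : Continuous _).inv₀ fun t => by positivity
        · gcongr; exact le_add_of_nonneg_right (sq_nonneg _)
    _ = (t2 - t1) / (‖z‖ ^ 2 - s ^ 2) := by
        rw [intervalIntegral.integral_const, smul_eq_mul, div_eq_mul_inv]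

lemma omegaUHP_le_of_re_le {z : ℂ} (hz : 0 < z.im) {t1 t2 s : ℝ} (h1 : 0 ≤ t1)
    (h12 : t1 ≤ t2) (hs : z.re ≤ s) (hsz : s ^ 2 < ‖z‖ ^ 2)
    (hpos : 0 < ‖z‖ ^ 2 - s ^ 2 + (t1 - s) * (t2 - s)) :
    omegaUHP z t1 t2 ≤ z.im / π * ((t2 - t1) / (‖z‖ ^ 2 - s ^ 2 + (t1 - s) * (t2 - s))) :=
  (omegaUHP_le_integral_of_re_le hz h1 h12 hs hsz).trans <| by
    gcongr
    exact integral_inv_add_sq_sub_le (sub_pos.mpr hsz) h12 hpos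

theorem stmt_11 (z : ℂ) (hz : 0 < z.im) (t1 t2 : ℝ) (h1 : 0 ≤ t1) (ht : t1 < t2) :
    (z.re ≤ 0 →
      omegaUHP z t1 t2 ≤ (t2 - t1) * ((1 / Real.pi) * (z.im / ‖z‖ ^ 2))) ∧
    (z.re / ‖z‖ < 2 * Real.sqrt (t1 * t2) / (t1 + t2) →
      ‖z‖ ≠ Real.sqrt (t1 * t2) →
      omegaUHP z t1 t2 ≤
        (t2 - t1) * z.im /
          (Real.pi * (‖z‖ - Real.sqrt (t1 * t2)) ^ 2)) ∧
    (∀ a ∈ Set.Ioo (0 : ℝ) 1,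
      z.re / ‖z‖ ≤ 2 * a * Real.sqrt (t1 * t2) / (t1 + t2) →
      omegaUHP z t1 t2 ≤
        (t2 - t1) / (Real.pi * (1 - a ^ 2)) * (z.im / ‖z‖ ^ 2)) := by
  have hr : 0 < ‖z‖ := norm_pos_iff.mpr fun h => by simp [h] at hz
  have hS : 0 < t1 + t2 := by linarith
  set g := √(t1 * t2)
  have hg2 : g ^ 2 = t1 * t2 := sq_sqrt (by nlinarith)
  set κ := 2 * g / (t1 + t2)
  have hκ0 : 0 ≤ κ := by positivity
  have hκ1 : κ < 1 := (div_lt_one hS).mpr (two_mul_sqrt_mul_lt_add h1 (by linarith) ht.ne)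
  refine ⟨fun hx => ?_, fun hx hrg => ?_, fun a ⟨ha0, ha1⟩ hx => ?_⟩
  · calc omegaUHP z t1 t2 ≤ z.im / π * ((t2 - t1) / (‖z‖ ^ 2 - 0 ^ 2)) :=
        omegaUHP_le_const_of_re_le hz h1 ht.le hx (by simpa using pow_pos hr 2)
      _ = _ := by rw [zero_pow two_ne_zero, sub_zero]; ring
  · have hs : z.re ≤ κ * ‖z‖ := ((div_lt_iff₀ hr).mp hx).le
    have hsz : (κ * ‖z‖) ^ 2 < ‖z‖ ^ 2 :=
      pow_lt_pow_left₀ (mul_lt_of_lt_one_left hr hκ1) (by positivity) two_ne_zero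
    have hκS : κ * (t1 + t2) = 2 * g := div_mul_cancel₀ (2 * g) hS.ne'
    have hpolar :
        ‖z‖ ^ 2 - (κ * ‖z‖) ^ 2 + (t1 - κ * ‖z‖) * (t2 - κ * ‖z‖) = (‖z‖ - g) ^ 2 := by
      linear_combination -hg2 - ‖z‖ * hκS
    have hpos : 0 < (‖z‖ - g) ^ 2 := sq_pos_of_ne_zero (sub_ne_zero.mpr hrg)
    calc omegaUHP z t1 t2 ≤ z.im / π * ((t2 - t1) / (‖z‖ - g) ^ 2) :=
          hpolar ▸ omegaUHP_le_of_re_le hz h1 ht.le hs hsz (hpolar ▸ hpos)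
      _ = _ := by rw [div_mul_div_comm, mul_comm z.im]
  · have hs : z.re ≤ a * κ * ‖z‖ := by
      rw [div_le_iff₀ hr] at hx
      exact hx.trans_eq (by ring)
    have hd0 : 0 < ‖z‖ ^ 2 * (1 - a ^ 2) :=
      mul_pos (pow_pos hr 2) (sub_pos.mpr (pow_lt_one₀ ha0.le ha1 two_ne_zero))
    have hd : ‖z‖ ^ 2 * (1 - a ^ 2) ≤ ‖z‖ ^ 2 - (a * κ * ‖z‖) ^ 2 := by
      have hκ2 : κ ^ 2 ≤ 1 := pow_le_one₀ hκ0 hκ1.le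
      nlinarith [mul_le_mul_of_nonneg_right hκ2 (sq_nonneg (a * ‖z‖))]
    calc omegaUHP z t1 t2
        ≤ z.im / π * ((t2 - t1) / (‖z‖ ^ 2 - (a * κ * ‖z‖) ^ 2)) :=
          omegaUHP_le_const_of_re_le hz h1 ht.le hs (by linarith)
      _ ≤ z.im / π * ((t2 - t1) / (‖z‖ ^ 2 * (1 - a ^ 2))) := by gcongr
      _ = _ := by field_simp
end

section
/- Let 0 ≤ t1 < t2 < +∞, set r := (t2−t1)/2 and t0 := (t1+t2)/2, and let z ∈ ℂ⁺. Then: ω(z,[t1,t2]) ≤ 1 always; ω(z,[t1,t2]) = 1/2 whenever |z − t0| = r; if |z − t0| > r, then ω(z,[t1,t2]) ≤ (1/π)·arctan( 2·r·|z−t0| / (|z−t0|² − r²) ) ≤ 2·r·|z−t0| / (π·(|z−t0|² − r²)); and if |z − t0| < r, then ω(z,[t1,t2]) ≥ 1 − (1/π)·arctan( 2·r·|z−t0| / (r² − |z−t0|²) ) ≥ 1 − (1/π)·2·r·|z−t0| / (r² − |z−t0|²). -/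
open MeasureTheory

lemma my_arctan_le_self {x : ℝ} (hx : 0 ≤ x) : Real.arctan x ≤ x := by
  have h1 : Real.arctan x < Real.pi / 2 := Real.arctan_lt_pi_div_two x
  have h2 : 0 ≤ Real.arctan x := by
    rw [← Real.arctan_zero]
    exact Real.arctan_strictMono.monotone hx
  calc Real.arctan x ≤ Real.tan (Real.arctan x) := Real.le_tan h2 h1
    _ = x := Real.tan_arctan x

lemma omega_eq (z : ℂ) (hz : 0 < z.im) (t1 t2 : ℝ) :
    omegaUHP z t1 t2 = (1 / Real.pi) *
      (Real.arctan ((t2 - z.re) / z.im) - Real.arctan ((t1 - z.re) / z.im)) := by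
  have hy : z.im ≠ 0 := ne_of_gt hz
  have hderiv : ∀ t ∈ Set.uIcc t1 t2,
      HasDerivAt (fun t => Real.arctan ((t - z.re) / z.im))
        (z.im / ((t - z.re) ^ 2 + z.im ^ 2)) t := by
    intro t _
    have h1 : HasDerivAt (fun t : ℝ => (t - z.re) / z.im) (1 / z.im) t := by
      simpa using ((hasDerivAt_id t).sub_const z.re).div_const z.im
    have h2 := (Real.hasDerivAt_arctan ((t - z.re) / z.im)).comp t h1
    refine h2.congr_deriv ?_
    have hden : (0:ℝ) < (t - z.re) ^ 2 + z.im ^ 2 := by positivity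
    field_simp
    ring
  have hcont : IntervalIntegrable (fun t => z.im / ((t - z.re) ^ 2 + z.im ^ 2))
      volume t1 t2 := by
    apply Continuous.intervalIntegrable
    apply continuous_const.div
    · continuity
    · intro t; positivity
  have hint := intervalIntegral.integral_eq_sub_of_hasDerivAt hderiv hcont
  unfold omegaUHP
  rw [intervalIntegral.integral_const_mul, hint]

set_option maxHeartbeats 1000000 in
theorem stmt_13 (z : ℂ) (hz : 0 < z.im) (t1 t2 r t0 d : ℝ) (h1 : 0 ≤ t1) (ht : t1 < t2)
    (hr : r = (t2 - t1) / 2) (ht0 : t0 = (t1 + t2) / 2)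
    (hd : d = ‖z - (t0 : ℂ)‖) :
    omegaUHP z t1 t2 ≤ 1 ∧
    (d = r → omegaUHP z t1 t2 = 1 / 2) ∧
    (r < d →
      omegaUHP z t1 t2 ≤ (1 / Real.pi) * Real.arctan (2 * r * d / (d ^ 2 - r ^ 2)) ∧
      (1 / Real.pi) * Real.arctan (2 * r * d / (d ^ 2 - r ^ 2)) ≤
        2 * r * d / (Real.pi * (d ^ 2 - r ^ 2))) ∧
    (d < r →
      1 - (1 / Real.pi) * Real.arctan (2 * r * d / (r ^ 2 - d ^ 2)) ≤
          omegaUHP z t1 t2 ∧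
      1 - (1 / Real.pi) * (2 * r * d / (r ^ 2 - d ^ 2)) ≤
        1 - (1 / Real.pi) * Real.arctan (2 * r * d / (r ^ 2 - d ^ 2))) := by
  have hy : 0 < z.im := hz
  have hpi : 0 < Real.pi := Real.pi_pos
  have hrpos : 0 < r := by rw [hr]; linarith
  have ht1 : t1 = t0 - r := by rw [hr, ht0]; ring
  have ht2 : t2 = t0 + r := by rw [hr, ht0]; ring
  have hd2 : d ^ 2 = (z.re - t0) ^ 2 + z.im ^ 2 := by
    rw [hd, Complex.sq_norm, Complex.normSq_apply]
    simp [Complex.sub_re, Complex.sub_im, Complex.ofReal_re, Complex.ofReal_im]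
    ring
  have hdpos : 0 < d := by
    have hd0 : 0 ≤ d := hd ▸ norm_nonneg _
    nlinarith [sq_nonneg (z.re - t0)]
  have hyd : z.im ≤ d := by nlinarith [sq_nonneg (z.re - t0)]
  set u := (t2 - z.re) / z.im with hu
  set v := (t1 - z.re) / z.im with hv
  have homega : omegaUHP z t1 t2 = (1 / Real.pi) * (Real.arctan u - Real.arctan v) :=
    omega_eq z hz t1 t2
  have hy2 : (0:ℝ) < z.im ^ 2 := by positivity
  have key : z.im ^ 2 * (1 + u * v) = d ^ 2 - r ^ 2 := by
    rw [hu, hv, ht1, ht2]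
    field_simp
    nlinarith [hd2]
  have huv2 : u - v = 2 * r / z.im := by
    rw [hu, hv, ht1, ht2]; field_simp; ring
  have huvlt : v < u := by
    rw [hu, hv, div_lt_div_iff₀ hy hy]
    nlinarith
  clear_value u v
  clear hu hv hd ht1 ht2 hr ht0 h1 ht hd2 hz
  refine ⟨?_, ?_, ?_, ?_⟩
  · -- omega ≤ 1
    rw [homega]
    have h1 : Real.arctan u < Real.pi / 2 := Real.arctan_lt_pi_div_two u
    have h2 : -(Real.pi / 2) < Real.arctan v := Real.neg_pi_div_two_lt_arctan v
    calc (1 / Real.pi) * (Real.arctan u - Real.arctan v) ≤ (1 / Real.pi) * Real.pi := by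
          apply mul_le_mul_of_nonneg_left (by linarith) (by positivity)
      _ = 1 := by field_simp
  · -- d = r
    intro hdr
    have h0 : u * v = -1 := by
      have hkey0 : z.im ^ 2 * (1 + u * v) = 0 := by rw [key, hdr]; ring
      have := (mul_eq_zero.mp hkey0).resolve_left (ne_of_gt hy2)
      linarith
    have hu0 : 0 < u := by
      by_contra h
      push_neg at h
      nlinarith [mul_nonneg (neg_nonneg.mpr h) (neg_nonneg.mpr (le_of_lt (lt_of_lt_of_le huvlt h)))]
    have hvne : v = -u⁻¹ := by
      have hune : u ≠ 0 := ne_of_gt hu0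
      field_simp
      linear_combination h0
    rw [homega, hvne, Real.arctan_neg, Real.arctan_inv_of_pos hu0]
    field_simp
    ring
  · -- r < d
    intro hrd
    have hpos : 0 < d ^ 2 - r ^ 2 := by nlinarith
    have h0 : 0 < 1 + u * v := by
      by_contra hcon
      push_neg at hcon
      have h' : z.im ^ 2 * (1 + u * v) ≤ 0 :=
        mul_nonpos_iff.mpr (Or.inl ⟨hy2.le, hcon⟩)
      rw [key] at h'
      linarith
    have h1uv : 1 - u * -v = (d ^ 2 - r ^ 2) / z.im ^ 2 := by
      rw [eq_div_iff (ne_of_gt hy2)]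
      nlinarith
    have h : u * -v < 1 := by nlinarith
    have harctan := Real.arctan_add (x := u) (y := -v) h
    have heq : (u + -v) / (1 - u * -v) = 2 * r * z.im / (d ^ 2 - r ^ 2) := by
      rw [h1uv, show u + -v = u - v by ring, huv2]
      field_simp
    rw [heq, Real.arctan_neg] at harctan
    have harc : Real.arctan u - Real.arctan v
        = Real.arctan (2 * r * z.im / (d ^ 2 - r ^ 2)) := by linarith
    have hmono : Real.arctan (2 * r * z.im / (d ^ 2 - r ^ 2))
        ≤ Real.arctan (2 * r * d / (d ^ 2 - r ^ 2)) := by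
      apply Real.arctan_strictMono.monotone
      rw [div_le_div_iff_of_pos_right hpos]
      exact mul_le_mul_of_nonneg_left hyd (by positivity)
    constructor
    · rw [homega, harc]
      exact mul_le_mul_of_nonneg_left hmono (by positivity)
    · have hs : (0:ℝ) ≤ 2 * r * d / (d ^ 2 - r ^ 2) := div_nonneg (by positivity) hpos.le
      calc (1 / Real.pi) * Real.arctan (2 * r * d / (d ^ 2 - r ^ 2))
          ≤ (1 / Real.pi) * (2 * r * d / (d ^ 2 - r ^ 2)) :=
            mul_le_mul_of_nonneg_left (my_arctan_le_self hs) (by positivity)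
        _ = 2 * r * d / (Real.pi * (d ^ 2 - r ^ 2)) := by
            rw [div_mul_div_comm, one_mul]
  · -- d < r
    intro hdr
    have hpos : 0 < r ^ 2 - d ^ 2 := by nlinarith
    have h0 : u * v < -1 := by
      by_contra hcon
      push_neg at hcon
      have h' : 0 ≤ z.im ^ 2 * (1 + u * v) := mul_nonneg hy2.le (by linarith)
      rw [key] at h'
      linarith
    have hu0 : 0 < u := by
      by_contra h
      push_neg at h
      nlinarith [mul_nonneg (neg_nonneg.mpr h) (neg_nonneg.mpr (le_of_lt (lt_of_lt_of_le huvlt h)))]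
    have h : 1 < u * -v := by nlinarith
    have harctan := Real.arctan_add_eq_add_pi (x := u) (y := -v) h hu0
    have h1uv : 1 - u * -v = (d ^ 2 - r ^ 2) / z.im ^ 2 := by
      rw [eq_div_iff (ne_of_gt hy2)]
      nlinarith
    have heq : (u + -v) / (1 - u * -v) = -(2 * r * z.im / (r ^ 2 - d ^ 2)) := by
      rw [h1uv, show u + -v = u - v by ring, huv2]
      rw [div_div_div_comm]
      have hD : d ^ 2 - r ^ 2 ≠ 0 := by nlinarith
      field_simp
      ring
    rw [heq, Real.arctan_neg, Real.arctan_neg] at harctan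
    have harc : Real.arctan u - Real.arctan v
        = Real.pi - Real.arctan (2 * r * z.im / (r ^ 2 - d ^ 2)) := by linarith
    have hmono : Real.arctan (2 * r * z.im / (r ^ 2 - d ^ 2))
        ≤ Real.arctan (2 * r * d / (r ^ 2 - d ^ 2)) := by
      apply Real.arctan_strictMono.monotone
      rw [div_le_div_iff_of_pos_right hpos]
      exact mul_le_mul_of_nonneg_left hyd (by positivity)
    constructor
    · rw [homega, harc]
      have hexp : (1 / Real.pi) * (Real.pi - Real.arctan (2 * r * z.im / (r ^ 2 - d ^ 2)))
          = 1 - (1 / Real.pi) * Real.arctan (2 * r * z.im / (r ^ 2 - d ^ 2)) := by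
        field_simp
      rw [hexp]
      have := mul_le_mul_of_nonneg_left hmono (by positivity : (0:ℝ) ≤ 1 / Real.pi)
      linarith
    · have hs : (0:ℝ) ≤ 2 * r * d / (r ^ 2 - d ^ 2) := div_nonneg (by positivity) hpos.le
      have := mul_le_mul_of_nonneg_left (my_arctan_le_self hs)
        (by positivity : (0:ℝ) ≤ 1 / Real.pi)
      linarith
end

section
/- Let ν be a positive Borel measure on ℂ that is finite on compact sets and satisfies the Blaschke condition near infinity for the upper half-plane: ∫_{{z ∈ ℂ⁺ : |z| ≥ r0}} Im z/|z|² dν(z) < +∞ for some r0 > 0. Then for all real numbers t1 < t2 the integral ∫_{ℂ⁺} ω(z,[t1,t2]) dν(z) is finite; consequently the balayage ν^bal(B) := ∫_{ℂ⁺} ω(z, B ∩ ℝ) dν(z) + ν(B ∖ ℂ⁺) defines a positive Borel measure on ℂ that is finite on compact sets. -/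
open MeasureTheory

/-- The Poisson kernel of the open upper half-plane at `z ∈ ℂ⁺` and `t ∈ ℝ`. -/
noncomputable def poissonKer (z : ℂ) (t : ℝ) : ℝ :=
  (1 / Real.pi) * (z.im / ((t - z.re) ^ 2 + z.im ^ 2))

/-- Harmonic measure of a Borel set `B ⊆ ℝ` at the point `z` for the open upper
half-plane, given by the Poisson integral of the indicator of `B`. -/
noncomputable def omegaSet (z : ℂ) (B : Set ℝ) : ℝ :=
  ∫ t in B, poissonKer z t

lemma poissonKer_nonneg {z : ℂ} (hz : 0 < z.im) (t : ℝ) : 0 ≤ poissonKer z t := by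
  have h := hz
  unfold poissonKer
  have h0 : (0:ℝ) < (t - z.re) ^ 2 + z.im ^ 2 := by positivity
  have h1 : (0:ℝ) < Real.pi := Real.pi_pos
  positivity

lemma poissonKer_eq {z : ℂ} (hz : 0 < z.im) (t : ℝ) :
    poissonKer z t = (1 / (Real.pi * z.im)) * (1 + ((t - z.re) / z.im) ^ 2)⁻¹ := by
  have h1 : z.im ≠ 0 := ne_of_gt hz
  have h2 : Real.pi ≠ 0 := Real.pi_ne_zero
  have h3 : (t - z.re) ^ 2 + z.im ^ 2 ≠ 0 := by positivity
  have h4 : 1 + ((t - z.re) / z.im) ^ 2 ≠ 0 := by positivity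
  rw [poissonKer]
  field_simp
  ring

lemma integrable_poissonKer {z : ℂ} (hz : 0 < z.im) : Integrable (poissonKer z) := by
  have h1 : z.im ≠ 0 := ne_of_gt hz
  have h : Integrable fun t : ℝ => (1 / (Real.pi * z.im)) * (1 + ((t - z.re) / z.im) ^ 2)⁻¹ :=
    ((integrable_inv_one_add_sq.comp_div h1).comp_sub_right z.re).const_mul _
  have heq : poissonKer z = fun t => (1 / (Real.pi * z.im)) * (1 + ((t - z.re) / z.im) ^ 2)⁻¹ :=
    funext fun t => poissonKer_eq hz t
  rw [heq]
  exact h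

lemma omegaSet_Icc_eq {z : ℂ} (hz : 0 < z.im) {t1 t2 : ℝ} (h : t1 ≤ t2) :
    omegaSet z (Set.Icc t1 t2) =
      (1 / Real.pi) *
        (Real.arctan ((t2 - z.re) / z.im) - Real.arctan ((t1 - z.re) / z.im)) := by
  have h1 : z.im ≠ 0 := ne_of_gt hz
  have hiv : omegaSet z (Set.Icc t1 t2) = ∫ t in t1..t2, poissonKer z t := by
    rw [omegaSet, intervalIntegral.integral_of_le h, MeasureTheory.integral_Icc_eq_integral_Ioc]
  rw [hiv]
  have hpt : ∀ t : ℝ, poissonKer z t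
      = (1 / (Real.pi * z.im)) * ((fun x : ℝ => (1 + x ^ 2)⁻¹) (t / z.im - z.re / z.im)) := by
    intro t
    rw [poissonKer_eq hz t, ← sub_div]
  simp_rw [hpt]
  rw [intervalIntegral.integral_const_mul,
    intervalIntegral.integral_comp_div_sub (fun x : ℝ => (1 + x ^ 2)⁻¹) h1 (z.re / z.im),
    integral_inv_one_add_sq]
  rw [← sub_div, ← sub_div]
  have hpi : Real.pi ≠ 0 := Real.pi_ne_zero
  rw [smul_eq_mul]
  field_simp

lemma omegaSet_Icc_le_one {z : ℂ} (hz : 0 < z.im) {t1 t2 : ℝ} (h : t1 ≤ t2) :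
    omegaSet z (Set.Icc t1 t2) ≤ 1 := by
  rw [omegaSet_Icc_eq hz h]
  have h1 := Real.arctan_lt_pi_div_two ((t2 - z.re) / z.im)
  have h2 := Real.neg_pi_div_two_lt_arctan ((t1 - z.re) / z.im)
  have hd : Real.arctan ((t2 - z.re) / z.im) - Real.arctan ((t1 - z.re) / z.im) ≤ Real.pi := by
    linarith
  have hpi : (0:ℝ) < Real.pi := Real.pi_pos
  calc (1 / Real.pi) *
        (Real.arctan ((t2 - z.re) / z.im) - Real.arctan ((t1 - z.re) / z.im))
      ≤ (1 / Real.pi) * Real.pi := by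
        apply mul_le_mul_of_nonneg_left hd (by positivity)
    _ = 1 := by field_simp

/-- The harmonic measure at `z`, pushed forward to `ℂ` via the real embedding. -/
noncomputable def poissonMeasure (z : ℂ) : Measure ℂ :=
  Measure.map (fun t : ℝ => (t : ℂ))
    (volume.withDensity fun t => ENNReal.ofReal (poissonKer z t))

lemma measurable_coe_RC : Measurable (fun t : ℝ => (t : ℂ)) :=
  Complex.continuous_ofReal.measurable

lemma poissonMeasure_apply (z : ℂ) {s : Set ℂ} (hs : MeasurableSet s) :
    poissonMeasure z s
      = ∫⁻ t in {t : ℝ | (t : ℂ) ∈ s}, ENNReal.ofReal (poissonKer z t) := by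
  rw [poissonMeasure, Measure.map_apply measurable_coe_RC hs,
    withDensity_apply _ (hs.preimage measurable_coe_RC)]
  rfl

lemma measurable_poissonKer_uncurry :
    Measurable fun p : ℂ × ℝ => ENNReal.ofReal (poissonKer p.1 p.2) := by
  apply ENNReal.measurable_ofReal.comp
  unfold poissonKer
  fun_prop

lemma measurable_poissonMeasure : Measurable poissonMeasure := by
  apply Measure.measurable_of_measurable_coe
  intro s hs
  have hA : MeasurableSet {t : ℝ | (t : ℂ) ∈ s} := hs.preimage measurable_coe_RC
  simp_rw [poissonMeasure_apply _ hs, ← lintegral_indicator hA]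
  have heq : ∀ z : ℂ, ∀ t : ℝ,
      {t : ℝ | (t : ℂ) ∈ s}.indicator (fun t => ENNReal.ofReal (poissonKer z t)) t
        = (Set.univ ×ˢ {t : ℝ | (t : ℂ) ∈ s}).indicator
            (fun p : ℂ × ℝ => ENNReal.ofReal (poissonKer p.1 p.2)) (z, t) := by
    intro z t
    by_cases ht : t ∈ {t : ℝ | (t : ℂ) ∈ s} <;>
      simp [Set.indicator, ht]
  simp_rw [heq]
  exact Measurable.lintegral_prod_right'
    (measurable_poissonKer_uncurry.indicator (MeasurableSet.univ.prod hA))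

theorem stmt_16 (ν : Measure ℂ) [IsFiniteMeasureOnCompacts ν]
    (hBl : ∃ r0 : ℝ, 0 < r0 ∧
      (∫⁻ z in {z : ℂ | 0 < z.im ∧ r0 ≤ ‖z‖},
          ENNReal.ofReal (z.im / ‖z‖ ^ 2) ∂ν) < ⊤) :
    (∀ t1 t2 : ℝ, t1 < t2 →
      (∫⁻ z in {z : ℂ | 0 < z.im},
          ENNReal.ofReal (omegaSet z (Set.Icc t1 t2)) ∂ν) < ⊤) ∧
    ∃ μ : Measure ℂ, IsFiniteMeasureOnCompacts μ ∧
      ∀ B : Set ℂ, MeasurableSet B →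
        μ B = (∫⁻ z in {z : ℂ | 0 < z.im},
              ENNReal.ofReal (omegaSet z {t : ℝ | (t : ℂ) ∈ B}) ∂ν) +
          ν (B \ {z : ℂ | 0 < z.im}) := by
  have hU : MeasurableSet {z : ℂ | 0 < z.im} :=
    measurableSet_lt measurable_const Complex.measurable_im
  -- Part 1 : finiteness of the lintegral of harmonic measures of intervals
  have key : ∀ t1 t2 : ℝ, t1 < t2 →
      (∫⁻ z in {z : ℂ | 0 < z.im},
          ENNReal.ofReal (omegaSet z (Set.Icc t1 t2)) ∂ν) < ⊤ := by
    intro t1 t2 h12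
    obtain ⟨r0, hr0, hfin⟩ := hBl
    set M := max |t1| |t2| with hMdef
    have hMnn : 0 ≤ M := le_trans (abs_nonneg t1) (le_max_left _ _)
    set R := max r0 (4 * M + 1) with hRdef
    have hRr0 : r0 ≤ R := le_max_left _ _
    have hRM : 4 * M + 1 ≤ R := le_max_right _ _
    have hRpos : 0 < R := lt_of_lt_of_le hr0 hRr0
    set f := fun z : ℂ => ENNReal.ofReal (omegaSet z (Set.Icc t1 t2)) with hfdef
    set A := {z : ℂ | 0 < z.im} ∩ {z : ℂ | ‖z‖ < R} with hAdef
    set Bs := {z : ℂ | 0 < z.im} ∩ {z : ℂ | R ≤ ‖z‖} with hBdef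
    have habs : Measurable (fun z : ℂ => ‖z‖) := continuous_norm.measurable
    have hAmeas : MeasurableSet A :=
      hU.inter (measurableSet_lt habs measurable_const)
    have hBmeas : MeasurableSet Bs :=
      hU.inter (measurableSet_le measurable_const habs)
    have hcover : {z : ℂ | 0 < z.im} ⊆ A ∪ Bs := by
      intro z hz
      rcases lt_or_ge (‖z‖) R with hc | hc
      · exact Or.inl ⟨hz, hc⟩
      · exact Or.inr ⟨hz, hc⟩
    have hsplit : (∫⁻ z in {z : ℂ | 0 < z.im}, f z ∂ν)
        ≤ (∫⁻ z in A, f z ∂ν) + (∫⁻ z in Bs, f z ∂ν) :=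
      le_trans (lintegral_mono_set hcover) (lintegral_union_le _ _ _)
    -- near part
    have hApart : (∫⁻ z in A, f z ∂ν) < ⊤ := by
      have hle : (∫⁻ z in A, f z ∂ν) ≤ ∫⁻ _ in A, 1 ∂ν := by
        apply setLIntegral_mono' hAmeas
        intro z hz
        exact ENNReal.ofReal_le_one.mpr (omegaSet_Icc_le_one hz.1 h12.le)
      have h1 : (∫⁻ _ in A, (1:ENNReal) ∂ν) = ν A := setLIntegral_one _
      have h2 : ν A ≤ ν (Metric.closedBall 0 R) := by
        apply measure_mono
        intro z hz
        simp only [Metric.mem_closedBall, Complex.dist_eq, sub_zero]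
        exact (hz.2).le
      have h3 : ν (Metric.closedBall 0 R) < ⊤ :=
        (isCompact_closedBall 0 R).measure_lt_top
      exact lt_of_le_of_lt hle (lt_of_le_of_lt (h1 ▸ h2) h3)
    -- far part
    have hBpart : (∫⁻ z in Bs, f z ∂ν) < ⊤ := by
      set c : ENNReal := ENNReal.ofReal (16 * (t2 - t1) / Real.pi) with hcdef
      have hcne : c ≠ ⊤ := ENNReal.ofReal_ne_top
      have hpt : ∀ z ∈ Bs, f z ≤ c * ENNReal.ofReal (z.im / ‖z‖ ^ 2) := by
        rintro z ⟨hz, hza⟩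
        have hs0 : 0 < ‖z‖ := lt_of_lt_of_le hRpos hza
        have hsq : z.re ^ 2 + z.im ^ 2 = ‖z‖ ^ 2 := by
          rw [Complex.sq_norm, Complex.normSq_apply]; ring
        have h4M : 4 * M + 1 ≤ ‖z‖ := le_trans hRM hza
        -- denominator lower bound on the interval
        have hden : ∀ t ∈ Set.Icc t1 t2,
            ‖z‖ ^ 2 / 16 ≤ (t - z.re) ^ 2 + z.im ^ 2 := by
          intro t ht
          have habst : |t| ≤ M := by
            have h1 := le_abs_self t2
            have h2 := neg_abs_le t1
            have h3 : |t1| ≤ M := le_max_left _ _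
            have h4 : |t2| ≤ M := le_max_right _ _
            rw [abs_le]
            exact ⟨by linarith [ht.1], by linarith [ht.2]⟩
          by_cases hre : |z.re| ≤ ‖z‖ / 2
          · have h5 : z.re ^ 2 ≤ (‖z‖ / 2) ^ 2 := by
              rw [← sq_abs z.re]
              exact pow_le_pow_left₀ (abs_nonneg _) hre 2
            nlinarith [sq_nonneg (t - z.re)]
          · push_neg at hre
            have h6 : |z.re| - |t| ≤ |t - z.re| := by
              have := abs_sub_abs_le_abs_sub z.re t
              rwa [abs_sub_comm z.re t] at this
            have h7 : ‖z‖ / 4 ≤ |t - z.re| := by linarith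
            have h8 : (‖z‖ / 4) ^ 2 ≤ (t - z.re) ^ 2 := by
              rw [← sq_abs (t - z.re)]
              exact pow_le_pow_left₀ (by positivity) h7 2
            nlinarith [sq_nonneg z.im]
        -- pointwise bound on the Poisson kernel
        have hker : ∀ t ∈ Set.Icc t1 t2,
            poissonKer z t ≤ (1 / Real.pi) * (z.im / (‖z‖ ^ 2 / 16)) := by
          intro t ht
          unfold poissonKer
          apply mul_le_mul_of_nonneg_left _ (by positivity)
          apply div_le_div_of_nonneg_left hz.le (by positivity) (hden t ht)
        have hint : omegaSet z (Set.Icc t1 t2)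
            ≤ (t2 - t1) * ((1 / Real.pi) * (z.im / (‖z‖ ^ 2 / 16))) := by
          have hmono : omegaSet z (Set.Icc t1 t2)
              ≤ ∫ _ in Set.Icc t1 t2,
                  (1 / Real.pi) * (z.im / (‖z‖ ^ 2 / 16)) := by
            apply setIntegral_mono_on ((integrable_poissonKer hz).integrableOn)
              (integrableOn_const measure_Icc_lt_top.ne) measurableSet_Icc
            exact hker
          have hconst : (∫ _ in Set.Icc t1 t2,
              (1 / Real.pi) * (z.im / (‖z‖ ^ 2 / 16)))
              = (t2 - t1) * ((1 / Real.pi) * (z.im / (‖z‖ ^ 2 / 16))) := by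
            rw [setIntegral_const, Measure.real, Real.volume_Icc, smul_eq_mul,
              ENNReal.toReal_ofReal (by linarith)]
          rw [hconst] at hmono
          exact hmono
        have hval : (t2 - t1) * ((1 / Real.pi) * (z.im / (‖z‖ ^ 2 / 16)))
            = (16 * (t2 - t1) / Real.pi) * (z.im / ‖z‖ ^ 2) := by
          have hπ : Real.pi ≠ 0 := Real.pi_ne_zero
          have hs : ‖z‖ ≠ 0 := ne_of_gt hs0
          field_simp
        rw [hfdef]
        calc ENNReal.ofReal (omegaSet z (Set.Icc t1 t2))
            ≤ ENNReal.ofReal ((16 * (t2 - t1) / Real.pi) * (z.im / ‖z‖ ^ 2)) := by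
              apply ENNReal.ofReal_le_ofReal
              rw [← hval]; exact hint
          _ = c * ENNReal.ofReal (z.im / ‖z‖ ^ 2) := by
              rw [hcdef, ENNReal.ofReal_mul (div_nonneg (by linarith) Real.pi_pos.le)]
      have hle1 : (∫⁻ z in Bs, f z ∂ν)
          ≤ ∫⁻ z in Bs, c * ENNReal.ofReal (z.im / ‖z‖ ^ 2) ∂ν :=
        setLIntegral_mono' hBmeas hpt
      have hle2 : (∫⁻ z in Bs, c * ENNReal.ofReal (z.im / ‖z‖ ^ 2) ∂ν)
          = c * ∫⁻ z in Bs, ENNReal.ofReal (z.im / ‖z‖ ^ 2) ∂ν :=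
        lintegral_const_mul' _ _ hcne
      have hsub : Bs ⊆ {z : ℂ | 0 < z.im ∧ r0 ≤ ‖z‖} := by
        rintro z ⟨hz, hza⟩
        exact ⟨hz, le_trans hRr0 hza⟩
      have hle3 : (∫⁻ z in Bs, ENNReal.ofReal (z.im / ‖z‖ ^ 2) ∂ν)
          ≤ ∫⁻ z in {z : ℂ | 0 < z.im ∧ r0 ≤ ‖z‖},
              ENNReal.ofReal (z.im / ‖z‖ ^ 2) ∂ν :=
        lintegral_mono_set hsub
      calc (∫⁻ z in Bs, f z ∂ν)
          ≤ ∫⁻ z in Bs, c * ENNReal.ofReal (z.im / ‖z‖ ^ 2) ∂ν := hle1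
        _ = c * ∫⁻ z in Bs, ENNReal.ofReal (z.im / ‖z‖ ^ 2) ∂ν := hle2
        _ ≤ c * ∫⁻ z in {z : ℂ | 0 < z.im ∧ r0 ≤ ‖z‖},
              ENNReal.ofReal (z.im / ‖z‖ ^ 2) ∂ν := mul_le_mul_right hle3 c
        _ < ⊤ := ENNReal.mul_lt_top ENNReal.ofReal_lt_top hfin
    exact lt_of_le_of_lt hsplit (ENNReal.add_lt_top.mpr ⟨hApart, hBpart⟩)
  -- Part 2 : construction of the balayage measure
  set μ : Measure ℂ :=
    (ν.restrict {z : ℂ | 0 < z.im}).bind poissonMeasure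
      + ν.restrict {z : ℂ | 0 < z.im}ᶜ with hμdef
  have happly : ∀ B : Set ℂ, MeasurableSet B →
      μ B = (∫⁻ z in {z : ℂ | 0 < z.im},
            ENNReal.ofReal (omegaSet z {t : ℝ | (t : ℂ) ∈ B}) ∂ν) +
        ν (B \ {z : ℂ | 0 < z.im}) := by
    intro B hB
    rw [hμdef, Measure.add_apply,
      Measure.bind_apply hB measurable_poissonMeasure.aemeasurable,
      Measure.restrict_apply hB]
    congr 1
    apply setLIntegral_congr_fun hU
    intro z hz
    beta_reduce
    rw [poissonMeasure_apply z hB,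
      ← ofReal_integral_eq_lintegral_ofReal
        ((integrable_poissonKer hz).integrableOn)
        (Filter.Eventually.of_forall (poissonKer_nonneg hz))]
    rfl
  refine ⟨key, μ, ⟨fun K hK => ?_⟩, happly⟩
  obtain ⟨r, hKr⟩ := hK.isBounded.subset_closedBall 0
  set R := max r 0 + 1 with hRdef
  have hRpos : (0:ℝ) < R := by positivity
  have hKR : K ⊆ Metric.closedBall 0 R := by
    refine hKr.trans (Metric.closedBall_subset_closedBall ?_)
    have := le_max_left r 0
    linarith
  have hball : MeasurableSet (Metric.closedBall (0:ℂ) R) := measurableSet_closedBall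
  have hle : μ K ≤ μ (Metric.closedBall 0 R) := measure_mono hKR
  rw [happly _ hball] at hle
  have hνpart : ν (Metric.closedBall (0:ℂ) R \ {z : ℂ | 0 < z.im}) < ⊤ :=
    lt_of_le_of_lt (measure_mono Set.diff_subset)
      ((isCompact_closedBall 0 R).measure_lt_top)
  have hlint : (∫⁻ z in {z : ℂ | 0 < z.im},
      ENNReal.ofReal (omegaSet z {t : ℝ | (t : ℂ) ∈ Metric.closedBall (0:ℂ) R}) ∂ν) < ⊤ := by
    have hmono : ∀ z ∈ {z : ℂ | 0 < z.im},
        ENNReal.ofReal (omegaSet z {t : ℝ | (t : ℂ) ∈ Metric.closedBall (0:ℂ) R})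
          ≤ ENNReal.ofReal (omegaSet z (Set.Icc (-(R + 1)) (R + 1))) := by
      intro z hz
      apply ENNReal.ofReal_le_ofReal
      apply setIntegral_mono_set ((integrable_poissonKer hz).integrableOn)
        (Filter.Eventually.of_forall (poissonKer_nonneg hz))
      apply Filter.Eventually.of_forall
      intro t ht
      simp only [Set.mem_setOf_eq, Metric.mem_closedBall, Complex.dist_eq, sub_zero,
        Complex.norm_real, Real.norm_eq_abs] at ht
      have := abs_le.mp ht
      exact ⟨by linarith [this.1], by linarith [this.2]⟩
    calc (∫⁻ z in {z : ℂ | 0 < z.im},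
        ENNReal.ofReal (omegaSet z {t : ℝ | (t : ℂ) ∈ Metric.closedBall (0:ℂ) R}) ∂ν)
        ≤ ∫⁻ z in {z : ℂ | 0 < z.im},
            ENNReal.ofReal (omegaSet z (Set.Icc (-(R + 1)) (R + 1))) ∂ν :=
          setLIntegral_mono' hU hmono
      _ < ⊤ := key _ _ (by linarith)
  exact lt_of_le_of_lt hle (ENNReal.add_lt_top.mpr ⟨hlint, hνpart⟩)
end
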